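/- Suppose conditions (I) and (II) hold. Then for every ε ∈ ℝ the map from 𝒞 × ker(Λ) to the space of bounded linear operators from 𝒞 × ker(Λ) to 𝒞 given by (x,v) ↦ (∂H₁/∂(x,v))((x,v),ε) is continuous; in fact, for all x₁, x₂ ∈ 𝒞, v₁, v₂ ∈ ker(Λ), the operator norm of the difference (∂H₁/∂(x,v))((x₁,v₁),ε) − (∂H₁/∂(x,v))((x₂,v₂),ε) is at most |ε| K α⁻¹ sup_{s≥0} ‖(∂f/∂x)(s,x₁(s)) − (∂f/∂x)(s,x₂(s))‖, and this bound tends to 0 as ‖x₁ − x₂‖∞ → 0. -/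

import Mathlib

open MeasureTheory Set

noncomputable section

/-- `Euc n` is Euclidean space `ℝⁿ` with the Euclidean norm. -/
abbrev Euc (n : ℕ) := EuclideanSpace ℝ (Fin n)

/-- `Cb n` is the Banach space `𝒞` of bounded continuous functions from `[0,∞)` into `ℝⁿ`,
with the supremum norm. -/
abbrev Cb (n : ℕ) := BoundedContinuousFunction (Set.Ici (0:ℝ)) (Euc n)

/-!
At two points `(x₁, v₁)`, `(x₂, v₂)` the derivatives differ only in the term
`ε Φ(t) ∫₀ᵗ Φ⁻¹(s) (J₂(s) - J₁(s)) ψ(s) ds` with `Jᵢ(s) = ∂f/∂x (s, xᵢ(s))`. The exponential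
bound `‖Φ(t)Φ⁻¹(s)‖ ≤ K e^{-α(t-s)}` and `∫₀ᵗ e^{-α(t-s)} ds ≤ α⁻¹` bound it by
`|ε| K α⁻¹ sup_s ‖J₁(s) - J₂(s)‖ ‖ψ‖∞`. When `‖x₁ - x₂‖∞ ≤ 1` both `xᵢ` take values in a fixed
compact ball of `ℝⁿ`, on which `∂f/∂x` is uniformly continuous uniformly in `s ≥ 0`, so the
supremum is small when `‖x₁ - x₂‖∞` is; continuity of the derivative follows.
-/

open Real BoundedContinuousFunction

theorem continuous_projIci {α : Type*} [LinearOrder α] [TopologicalSpace α]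
    [OrderClosedTopology α] {a : α} : Continuous (projIci a) :=
  (continuous_const.max continuous_id).subtype_mk _

theorem ContinuousOn.of_mul_eq_one {R X : Type*} [NormedRing R] [CompleteSpace R]
    [TopologicalSpace X] {u v : X → R} {s : Set X} (hu : ContinuousOn u s)
    (huv : ∀ x ∈ s, u x * v x = 1 ∧ v x * u x = 1) : ContinuousOn v s := by
  have hv : ∀ x ∈ s, v x = Ring.inverse (u x) := fun x hx =>
    (Ring.inverse_unit ⟨u x, v x, (huv x hx).1, (huv x hx).2⟩).symm
  refine fun x hx => ContinuousWithinAt.congr ?_ hv (hv x hx)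
  let w : Rˣ := ⟨u x, v x, (huv x hx).1, (huv x hx).2⟩
  exact (NormedRing.inverse_continuousAt w).comp_continuousWithinAt (f := u) (hu x hx)

theorem ContDiff.continuous_fderiv_right {𝕜 E F G : Type*} [NontriviallyNormedField 𝕜]
    [NormedAddCommGroup E] [NormedSpace 𝕜 E] [NormedAddCommGroup F] [NormedSpace 𝕜 F]
    [NormedAddCommGroup G] [NormedSpace 𝕜 G] {f : E → F → G}
    (hf : ContDiff 𝕜 1 fun q : E × F => f q.1 q.2) :
    Continuous fun q : E × F => fderiv 𝕜 (f q.1) q.2 := by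
  have hpartial : ∀ q : E × F, fderiv 𝕜 (f q.1) q.2 =
      fderiv 𝕜 (fun q : E × F => f q.1 q.2) q ∘L ContinuousLinearMap.inr 𝕜 E F := fun (a, y) =>
    ((hf.differentiable one_ne_zero (a, y)).hasFDerivAt.comp y
      (hasFDerivAt_prodMk_right a y) :).fderiv
  simp_rw [hpartial]
  exact (hf.continuous_fderiv one_ne_zero).clm_comp continuous_const

theorem intervalIntegral_exp_neg_mul_sub_le {α : ℝ} (hα : 0 < α) (t : ℝ) :
    ∫ s in (0:ℝ)..t, exp (-α * (t - s)) ≤ α⁻¹ := by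
  have hshift : ∀ s, -α * (t - s) = α * s - α * t := fun s => by ring
  simp_rw [hshift]
  rw [intervalIntegral.integral_comp_mul_sub (fun u => exp u) hα.ne', integral_exp, smul_eq_mul,
    sub_self, exp_zero]
  exact mul_le_of_le_one_right (inv_nonneg.2 hα.le) (sub_le_self _ (exp_pos _).le)

section ExponentialBound

variable {E : Type*} [NormedAddCommGroup E] [NormedSpace ℝ E] [CompleteSpace E]
  {Φ Φinv : ℝ → E →L[ℝ] E} {K α t : ℝ}

theorem norm_apply_intervalIntegral_le_of_exp_bound {g : ℝ → E} {N : ℝ} (hK : 0 ≤ K)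
    (hα : 0 < α) (ht : 0 ≤ t)
    (hKα : ∀ s, 0 ≤ s → s ≤ t → ‖Φ t ∘L Φinv s‖ ≤ K * exp (-α * (t - s)))
    (hg : IntervalIntegrable (fun s => Φinv s (g s)) volume 0 t)
    (hN : ∀ s ∈ Icc 0 t, ‖g s‖ ≤ N) :
    ‖Φ t (∫ s in (0:ℝ)..t, Φinv s (g s))‖ ≤ K * α⁻¹ * N := by
  have hN0 : 0 ≤ N := (norm_nonneg _).trans (hN 0 ⟨le_rfl, ht⟩)
  have hpointwise : ∀ s ∈ Ioc 0 t, ‖Φ t (Φinv s (g s))‖ ≤ K * N * exp (-α * (t - s)) :=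
    fun s hs => by
      have := (Φ t ∘L Φinv s).le_of_opNorm_le_of_le (hKα s hs.1.le hs.2)
        (hN s (Ioc_subset_Icc_self hs))
      rwa [mul_right_comm] at this
  rw [← ContinuousLinearMap.intervalIntegral_comp_comm _ hg]
  calc ‖∫ s in (0:ℝ)..t, Φ t (Φinv s (g s))‖
      ≤ ∫ s in (0:ℝ)..t, K * N * exp (-α * (t - s)) :=
        intervalIntegral.norm_integral_le_of_norm_le ht (ae_of_all _ hpointwise)
          (by apply Continuous.intervalIntegrable; fun_prop)
    _ = K * N * ∫ s in (0:ℝ)..t, exp (-α * (t - s)) := intervalIntegral.integral_const_mul _ _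
    _ ≤ K * N * α⁻¹ := by gcongr; exact intervalIntegral_exp_neg_mul_sub_le hα t
    _ = K * α⁻¹ * N := by ring

theorem norm_apply_intervalIntegral_sub_le_of_exp_bound {J₁ J₂ : ℝ → E →L[ℝ] E} {ψ : ℝ → E}
    {M R : ℝ} (hK : 0 ≤ K) (hα : 0 < α) (ht : 0 ≤ t)
    (hKα : ∀ s, 0 ≤ s → s ≤ t → ‖Φ t ∘L Φinv s‖ ≤ K * exp (-α * (t - s)))
    (hΦinv : ContinuousOn Φinv (Icc 0 t)) (hJ₁ : ContinuousOn J₁ (Icc 0 t))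
    (hJ₂ : ContinuousOn J₂ (Icc 0 t)) (hψ : ContinuousOn ψ (Icc 0 t))
    (hM : ∀ s ∈ Icc 0 t, ‖J₁ s - J₂ s‖ ≤ M) (hR : ∀ s ∈ Icc 0 t, ‖ψ s‖ ≤ R) :
    ‖Φ t (∫ s in (0:ℝ)..t, Φinv s (J₁ s (ψ s))) - Φ t (∫ s in (0:ℝ)..t, Φinv s (J₂ s (ψ s)))‖
      ≤ K * α⁻¹ * (M * R) := by
  have hint : ∀ J : ℝ → E →L[ℝ] E, ContinuousOn J (Icc 0 t) →
      IntervalIntegrable (fun s => Φinv s (J s (ψ s))) volume 0 t := fun J hJ =>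
    ((hΦinv.clm_apply (hJ.clm_apply hψ)).mono (uIcc_of_le ht).subset).intervalIntegrable
  rw [← map_sub, ← intervalIntegral.integral_sub (hint J₁ hJ₁) (hint J₂ hJ₂)]
  simp_rw [← map_sub, ← _root_.sub_apply]
  exact norm_apply_intervalIntegral_le_of_exp_bound hK hα ht hKα (hint (J₁ - J₂) (hJ₁.sub hJ₂))
    fun s hs => (J₁ s - J₂ s).le_of_opNorm_le_of_le (hM s hs) (hR s hs)

end ExponentialBound

theorem opNorm_sub_le_of_eq_variationOfConstants {E : Type*} [NormedAddCommGroup E]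
    [NormedSpace ℝ E] [CompleteSpace E] (V : Submodule ℝ E) {Φ Φinv : ℝ → E →L[ℝ] E}
    {J : ℝ → E → E →L[ℝ] E}
    (DH : (Ici (0:ℝ) →ᵇ E) × V → ℝ → ((Ici (0:ℝ) →ᵇ E) × V →L[ℝ] (Ici (0:ℝ) →ᵇ E)))
    (hDH : ∀ (x : Ici (0:ℝ) →ᵇ E) (v : V) (ε : ℝ) (ψ : Ici (0:ℝ) →ᵇ E) (w : V) (t : Ici (0:ℝ)),
      DH (x, v) ε (ψ, w) t = ψ t - Φ t (w : E) -
        ε • Φ t (∫ s in (0:ℝ)..(t:ℝ), Φinv s (J s (x (projIci 0 s)) (ψ (projIci 0 s)))))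
    {K α : ℝ} (hK : 0 ≤ K) (hα : 0 < α)
    (hKα : ∀ s t : ℝ, 0 ≤ s → s ≤ t → ‖Φ t ∘L Φinv s‖ ≤ K * exp (-α * (t - s)))
    (hΦinv : ContinuousOn Φinv (Ici 0)) (hJ : Continuous fun q : ℝ × E => J q.1 q.2)
    (ε : ℝ) (x₁ x₂ : Ici (0:ℝ) →ᵇ E) (v₁ v₂ : V) {M : ℝ}
    (hM : ∀ s ≥ (0:ℝ), ‖J s (x₁ (projIci 0 s)) - J s (x₂ (projIci 0 s))‖ ≤ M) :
    ‖DH (x₁, v₁) ε - DH (x₂, v₂) ε‖ ≤ |ε| * K * α⁻¹ * M := by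
  have hM0 : 0 ≤ M := (norm_nonneg _).trans (hM 0 le_rfl)
  have hcomp : ∀ x : Ici (0:ℝ) →ᵇ E, Continuous fun s => x (projIci 0 s) := fun x =>
    x.continuous.comp continuous_projIci
  have hJx : ∀ x : Ici (0:ℝ) →ᵇ E, Continuous fun s => J s (x (projIci 0 s)) :=
    fun x => hJ.comp (continuous_id.prodMk (hcomp x))
  refine ContinuousLinearMap.opNorm_le_bound _ (by positivity) fun ⟨ψ, w⟩ => ?_
  refine (BoundedContinuousFunction.norm_le (by positivity)).2 fun t => ?_
  have key := norm_apply_intervalIntegral_sub_le_of_exp_bound hK hα t.2 (hKα · t)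
    (hΦinv.mono Icc_subset_Ici_self) (hJx x₂).continuousOn (hJx x₁).continuousOn
    (hcomp ψ).continuousOn
    (fun s hs => norm_sub_rev (J s _) _ ▸ hM s hs.1) (fun s _ => ψ.norm_coe_le_norm _)
  rw [_root_.sub_apply, BoundedContinuousFunction.sub_apply, hDH, hDH, sub_sub_sub_cancel_left,
    ← smul_sub, norm_smul, Real.norm_eq_abs]
  calc |ε| * ‖_‖ ≤ |ε| * (K * α⁻¹ * (M * ‖ψ‖)) := by gcongr
    _ = |ε| * K * α⁻¹ * M * ‖ψ‖ := by ring
    _ ≤ _ := by gcongr; exact norm_fst_le (ψ, w)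

theorem exists_forall_dist_le_of_uniformContinuousOn {A X E F : Type*} [PseudoMetricSpace A]
    [TopologicalSpace X] [NormedAddCommGroup E] [ProperSpace E] [PseudoMetricSpace F]
    {T : Set A} {G : A × E → F} (hG : ∀ S : Set E, IsCompact S → UniformContinuousOn G (T ×ˢ S))
    (x₂ : X →ᵇ E) {η : ℝ} (hη : 0 < η) :
    ∃ δ > 0, ∀ x₁ : X →ᵇ E, dist x₁ x₂ ≤ δ →
      ∀ a ∈ T, ∀ τ, dist (G (a, x₁ τ)) (G (a, x₂ τ)) ≤ η := by
  obtain ⟨δ, hδ, hGδ⟩ := Metric.uniformContinuousOn_iff_le.1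
    (hG _ (isCompact_closedBall (0:E) (‖x₂‖ + 1))) η hη
  refine ⟨min δ 1, by positivity, fun x₁ hx a ha τ => hGδ _ ⟨ha, ?_⟩ _ ⟨ha, ?_⟩ ?_⟩
  · rw [mem_closedBall_zero_iff]
    exact (x₁.norm_coe_le_norm τ).trans
      (norm_le_norm_add_const_of_dist_le (hx.trans (min_le_right _ _)))
  · rw [mem_closedBall_zero_iff]
    linarith [x₂.norm_coe_le_norm τ]
  · rw [Prod.dist_eq, dist_self, max_eq_right dist_nonneg]
    exact (x₁.dist_coe_le_dist τ).trans (hx.trans (min_le_left _ _))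

theorem stmt_19_general {n : ℕ}
    -- the coefficient matrix `A`, the fundamental matrix `Φ` and its pointwise inverse `Φinv`
    (A Φ Φinv : ℝ → (Euc n →L[ℝ] Euc n))
    (hΦode : ∀ t ∈ Set.Ici (0:ℝ), HasDerivWithinAt Φ (A t ∘L Φ t) (Set.Ici 0) t)
    (hΦinv : ∀ t ∈ Set.Ici (0:ℝ), Φ t ∘L Φinv t = 1 ∧ Φinv t ∘L Φ t = 1)
    -- condition guaranteeing `Φ(·)∫₀· Φ⁻¹(s)ψ(s) ds ∈ 𝒞`
    (K α : ℝ) (hK : 0 < K) (hα : 0 < α)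
    (hKα : ∀ s t : ℝ, 0 ≤ s → s ≤ t → ‖Φ t ∘L Φinv s‖ ≤ K * Real.exp (-α * (t - s)))
    (Λ : Euc n →L[ℝ] Euc n)
    -- `f` is continuously differentiable, and condition (II) holds
    (f : ℝ → Euc n → Euc n)
    (hf : ContDiff ℝ 1 fun q : ℝ × Euc n => f q.1 q.2)
    (hIIa : ∀ S : Set (Euc n), IsCompact S →
      UniformContinuousOn (fun q : ℝ × Euc n => fderiv ℝ (f q.1) q.2) (Set.Ici 0 ×ˢ S))
    -- the partial derivative map `(x,v) ↦ ∂H₁/∂(x,v)((x,v),ε)`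
    (DH₁ : Cb n × ↥(LinearMap.ker (Λ : Euc n →ₗ[ℝ] Euc n)) → ℝ → ((Cb n × ↥(LinearMap.ker (Λ : Euc n →ₗ[ℝ] Euc n))) →L[ℝ] Cb n))
    (hDH₁ : ∀ (x : Cb n) (v : ↥(LinearMap.ker (Λ : Euc n →ₗ[ℝ] Euc n))) (ε : ℝ)
        (ψ : Cb n) (w : ↥(LinearMap.ker (Λ : Euc n →ₗ[ℝ] Euc n))) (t : Set.Ici (0:ℝ)),
      DH₁ (x, v) ε (ψ, w) t = ψ t - Φ t (w : Euc n) -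
        ε • Φ t (∫ s in (0:ℝ)..(t:ℝ),
          Φinv s (fderiv ℝ (f s) (x (Set.projIci 0 s)) (ψ (Set.projIci 0 s))))) :
    -- (a) for each `ε`, `(x,v) ↦ ∂H₁/∂(x,v)((x,v),ε)` is continuous;
    -- (b) the operator norm of the difference of derivatives at `(x₁,v₁)` and `(x₂,v₂)` is at
    --     most `|ε| K α⁻¹ · sup_{s≥0} ‖(∂f/∂x)(s,x₁(s)) − (∂f/∂x)(s,x₂(s))‖`;
    -- (c) this bound tends to `0` as `‖x₁ − x₂‖∞ → 0`
    (∀ ε : ℝ, Continuous fun q : Cb n × ↥(LinearMap.ker (Λ : Euc n →ₗ[ℝ] Euc n)) => DH₁ q ε) ∧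
    (∀ (ε : ℝ) (x₁ x₂ : Cb n) (v₁ v₂ : ↥(LinearMap.ker (Λ : Euc n →ₗ[ℝ] Euc n))) (M : ℝ),
      (∀ s ≥ (0:ℝ),
        ‖fderiv ℝ (f s) (x₁ (Set.projIci 0 s)) -
          fderiv ℝ (f s) (x₂ (Set.projIci 0 s))‖ ≤ M) →
      ‖DH₁ (x₁, v₁) ε - DH₁ (x₂, v₂) ε‖ ≤ |ε| * K * α⁻¹ * M) ∧
    (∀ (x₂ : Cb n) (η : ℝ), 0 < η → ∃ δ > (0:ℝ), ∀ x₁ : Cb n, ‖x₁ - x₂‖ ≤ δ →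
      ∀ s ≥ (0:ℝ),
        ‖fderiv ℝ (f s) (x₁ (Set.projIci 0 s)) -
          fderiv ℝ (f s) (x₂ (Set.projIci 0 s))‖ ≤ η) := by
  have hΦinv_cont : ContinuousOn Φinv (Ici 0) :=
    ContinuousOn.of_mul_eq_one (fun t ht => (hΦode t ht).continuousWithinAt) hΦinv
  have hb : ∀ ε x₁ x₂ v₁ v₂ M, _ → _ := fun ε x₁ x₂ v₁ v₂ M =>
    opNorm_sub_le_of_eq_variationOfConstants _ DH₁ hDH₁ hK.le hα hKα hΦinv_cont
      hf.continuous_fderiv_right ε x₁ x₂ v₁ v₂ (M := M)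
  have hc : ∀ (x₂ : Cb n) (η : ℝ), 0 < η → ∃ δ > (0:ℝ), ∀ x₁ : Cb n, ‖x₁ - x₂‖ ≤ δ →
      ∀ s ≥ (0:ℝ), ‖fderiv ℝ (f s) (x₁ (projIci 0 s)) - fderiv ℝ (f s) (x₂ (projIci 0 s))‖ ≤ η := by
    intro x₂ η hη
    obtain ⟨δ, hδ, hclose⟩ := exists_forall_dist_le_of_uniformContinuousOn hIIa x₂ hη
    exact ⟨δ, hδ, fun x₁ hx s hs => by
      simpa only [dist_eq_norm] using hclose x₁ (by rwa [dist_eq_norm]) s hs _⟩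
  refine ⟨fun ε => ?_, hb, hc⟩
  refine (Metric.continuous_iff (f := fun q => DH₁ q ε)).2 fun q₂ η hη => ?_
  obtain ⟨η', hη', hη'η⟩ := exists_pos_mul_lt hη (|ε| * K * α⁻¹)
  obtain ⟨δ, hδ, hclose⟩ := hc q₂.1 η' hη'
  refine ⟨δ, hδ, fun q₁ hq => ?_⟩
  refine (dist_eq_norm (DH₁ q₁ ε) (DH₁ q₂ ε)).trans_lt
    ((hb ε q₁.1 q₂.1 q₁.2 q₂.2 η' (hclose q₁.1 ?_)).trans_lt hη'η)
  exact (norm_fst_le (q₁ - q₂)).trans (dist_eq_norm q₁ q₂ ▸ hq.le)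

theorem stmt_19 {n : ℕ} (hn : 1 ≤ n)
    -- the coefficient matrix `A`, the fundamental matrix `Φ` and its pointwise inverse `Φinv`
    (A Φ Φinv : ℝ → (Euc n →L[ℝ] Euc n))
    (hA : ContinuousOn A (Set.Ici 0))
    (hΦ0 : Φ 0 = 1)
    (hΦode : ∀ t ∈ Set.Ici (0:ℝ), HasDerivWithinAt Φ (A t ∘L Φ t) (Set.Ici 0) t)
    (hΦinv : ∀ t ∈ Set.Ici (0:ℝ), Φ t ∘L Φinv t = 1 ∧ Φinv t ∘L Φ t = 1)
    -- condition guaranteeing `Φ(·)∫₀· Φ⁻¹(s)ψ(s) ds ∈ 𝒞`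
    (K α : ℝ) (hK : 0 < K) (hα : 0 < α)
    (hKα : ∀ s t : ℝ, 0 ≤ s → s ≤ t → ‖Φ t ∘L Φinv s‖ ≤ K * Real.exp (-α * (t - s)))
    -- the bounded linear boundary operator `Γ` and the matrix `Λ`, whose columns are `Γ(Φᵢ)`
    (Γ : Cb n →L[ℝ] Euc n)
    (ΦC : Euc n → Cb n) (hΦC : ∀ (v : Euc n) (t : Set.Ici (0:ℝ)), ΦC v t = Φ t v)
    (Λ : Euc n →L[ℝ] Euc n) (hΛ : ∀ v, Λ v = Γ (ΦC v))
    -- `f` is continuously differentiable, and condition (II) holds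
    (f : ℝ → Euc n → Euc n)
    (hf : ContDiff ℝ 1 fun q : ℝ × Euc n => f q.1 q.2)
    (hIIa : ∀ S : Set (Euc n), IsCompact S →
      UniformContinuousOn (fun q : ℝ × Euc n => fderiv ℝ (f q.1) q.2) (Set.Ici 0 ×ˢ S))
    (hIIb : ∃ M, ∀ t ≥ (0:ℝ), ‖fderiv ℝ (f t) 0‖ ≤ M)
    -- `h ∈ 𝒞`
    (h : Cb n)
    -- the partial derivative map `(x,v) ↦ ∂H₁/∂(x,v)((x,v),ε)`
    (DH₁ : Cb n × ↥(LinearMap.ker (Λ : Euc n →ₗ[ℝ] Euc n)) → ℝ → ((Cb n × ↥(LinearMap.ker (Λ : Euc n →ₗ[ℝ] Euc n))) →L[ℝ] Cb n))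
    (hDH₁ : ∀ (x : Cb n) (v : ↥(LinearMap.ker (Λ : Euc n →ₗ[ℝ] Euc n))) (ε : ℝ)
        (ψ : Cb n) (w : ↥(LinearMap.ker (Λ : Euc n →ₗ[ℝ] Euc n))) (t : Set.Ici (0:ℝ)),
      DH₁ (x, v) ε (ψ, w) t = ψ t - Φ t (w : Euc n) -
        ε • Φ t (∫ s in (0:ℝ)..(t:ℝ),
          Φinv s (fderiv ℝ (f s) (x (Set.projIci 0 s)) (ψ (Set.projIci 0 s))))) :
    -- (a) for each `ε`, `(x,v) ↦ ∂H₁/∂(x,v)((x,v),ε)` is continuous;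
    -- (b) the operator norm of the difference of derivatives at `(x₁,v₁)` and `(x₂,v₂)` is at
    --     most `|ε| K α⁻¹ · sup_{s≥0} ‖(∂f/∂x)(s,x₁(s)) − (∂f/∂x)(s,x₂(s))‖`;
    -- (c) this bound tends to `0` as `‖x₁ − x₂‖∞ → 0`
    (∀ ε : ℝ, Continuous fun q : Cb n × ↥(LinearMap.ker (Λ : Euc n →ₗ[ℝ] Euc n)) => DH₁ q ε) ∧
    (∀ (ε : ℝ) (x₁ x₂ : Cb n) (v₁ v₂ : ↥(LinearMap.ker (Λ : Euc n →ₗ[ℝ] Euc n))) (M : ℝ),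
      (∀ s ≥ (0:ℝ),
        ‖fderiv ℝ (f s) (x₁ (Set.projIci 0 s)) -
          fderiv ℝ (f s) (x₂ (Set.projIci 0 s))‖ ≤ M) →
      ‖DH₁ (x₁, v₁) ε - DH₁ (x₂, v₂) ε‖ ≤ |ε| * K * α⁻¹ * M) ∧
    (∀ (x₂ : Cb n) (η : ℝ), 0 < η → ∃ δ > (0:ℝ), ∀ x₁ : Cb n, ‖x₁ - x₂‖ ≤ δ →
      ∀ s ≥ (0:ℝ),
        ‖fderiv ℝ (f s) (x₁ (Set.projIci 0 s)) -
          fderiv ℝ (f s) (x₂ (Set.projIci 0 s))‖ ≤ η) :=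
  stmt_19_general A Φ Φinv hΦode hΦinv K α hK hα hKα Λ f hf hIIa DH₁ hDH₁
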